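/- arXiv:2208.03810 — 2 statements merged into one kernel-verified Lean document; each statement's English description precedes it below -/
import Mathlib

section
/- There is a constant c > 0 such that for every integer d ≥ 2, letting n = 2^d + d and letting f : {0,1}^n → {0,1} be the address function on n variables, under unit costs and the uniform distribution OPT_N(f) ≥ c · (n / log₂ n) · OPT_A(f). -/
open Finset

/-- The set of tested indices `T` determines `f` on input `x`:
every input agreeing with `x` on `T` gives the same function value. -/
def Determines (n : ℕ) (f : (Fin n → Bool) → Bool) (T : Finset (Fin n))
    (x : Fin n → Bool) : Prop :=
  ∀ x' : Fin n → Bool, (∀ i ∈ T, x' i = x i) → f x' = f x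

/-- The set of indices tested by the non-adaptive strategy `π` in its first `k` tests. -/
def prefixSet (n : ℕ) (π : Equiv.Perm (Fin n)) (k : ℕ) : Finset (Fin n) :=
  Finset.univ.filter (fun i => (π.symm i).val < k)

/-- The number of tests performed by the non-adaptive strategy `π` on input `x`:
the least `k` such that the first `k` tested indices determine `f` on `x`. -/
noncomputable def naSteps (n : ℕ) (f : (Fin n → Bool) → Bool)
    (π : Equiv.Perm (Fin n)) (x : Fin n → Bool) : ℕ :=
  sInf {k : ℕ | Determines n f (prefixSet n π k) x}

/-- The cost incurred by the non-adaptive strategy `π` on input `x`, with cost vector `c`. -/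
noncomputable def naCost (n : ℕ) (f : (Fin n → Bool) → Bool) (c : Fin n → ℝ)
    (π : Equiv.Perm (Fin n)) (x : Fin n → Bool) : ℝ :=
  ∑ i ∈ prefixSet n π (naSteps n f π x), c i

/-- Probability of the outcome `x` under the product distribution with parameters `p`. -/
def prodWeight (n : ℕ) (p : Fin n → ℝ) (x : Fin n → Bool) : ℝ :=
  ∏ i : Fin n, if x i then p i else 1 - p i

/-- Expected cost of the non-adaptive strategy `π`. -/
noncomputable def naExpCost (n : ℕ) (f : (Fin n → Bool) → Bool) (c : Fin n → ℝ)
    (p : Fin n → ℝ) (π : Equiv.Perm (Fin n)) : ℝ :=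
  ∑ x : Fin n → Bool, prodWeight n p x * naCost n f c π x

/-- Optimal expected cost among non-adaptive strategies. -/
noncomputable def OPTN (n : ℕ) (f : (Fin n → Bool) → Bool) (c : Fin n → ℝ)
    (p : Fin n → ℝ) : ℝ :=
  sInf { r : ℝ | ∃ π : Equiv.Perm (Fin n), r = naExpCost n f c p π }

/-- Binary decision trees over `n` variables (adaptive strategies). -/
inductive DecTree (n : ℕ) : Type
  | leaf : Bool → DecTree n
  | node : Fin n → DecTree n → DecTree n → DecTree n

/-- Evaluation of a decision tree on an input. -/
def DecTree.eval {n : ℕ} : DecTree n → (Fin n → Bool) → Bool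
  | .leaf b, _ => b
  | .node i t0 t1, x => if x i then DecTree.eval t1 x else DecTree.eval t0 x

/-- Cost of a decision tree on input `x`: the sum of the costs of the indices
labeling the internal nodes on the root-to-leaf path followed on `x`. -/
def DecTree.costOn {n : ℕ} (c : Fin n → ℝ) : DecTree n → (Fin n → Bool) → ℝ
  | .leaf _, _ => 0
  | .node i t0 t1, x =>
      c i + (if x i then DecTree.costOn c t1 x else DecTree.costOn c t0 x)

/-- The decision tree `t` computes the function `f`. -/
def DecTree.Computes {n : ℕ} (t : DecTree n) (f : (Fin n → Bool) → Bool) : Prop :=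
  ∀ x, t.eval x = f x

/-- Expected cost of an adaptive strategy (decision tree). -/
noncomputable def adExpCost (n : ℕ) (c : Fin n → ℝ) (p : Fin n → ℝ)
    (t : DecTree n) : ℝ :=
  ∑ x : Fin n → Bool, prodWeight n p x * DecTree.costOn c t x

/-- Optimal expected cost among adaptive strategies computing `f`. -/
noncomputable def OPTA (n : ℕ) (f : (Fin n → Bool) → Bool) (c : Fin n → ℝ)
    (p : Fin n → ℝ) : ℝ :=
  sInf { r : ℝ | ∃ t : DecTree n, DecTree.Computes t f ∧ r = adExpCost n c p t }

/-- `f` is the monotone read-once DNF whose terms are the (nonempty, pairwise disjoint)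
sets of variables `T 0, …, T (m-1)`. -/
def IsReadOnceDNF (n m : ℕ) (T : Fin m → Finset (Fin n))
    (f : (Fin n → Bool) → Bool) : Prop :=
  (∀ j, (T j).Nonempty) ∧
  (∀ j k, j ≠ k → Disjoint (T j) (T k)) ∧
  (∀ x, f x = true ↔ ∃ j, ∀ i ∈ T j, x i = true)

/-- The value of variable `j` of `x : Fin (2^d + d) → Bool` (false for out-of-range `j`).
Variables `0, …, d-1` are the address bits and variables `d, …, d + 2^d - 1` are the
dedicated bits. -/
def xAt (d : ℕ) (x : Fin (2 ^ d + d) → Bool) (j : ℕ) : Bool :=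
  if h : j < 2 ^ d + d then x ⟨j, h⟩ else false

/-- The address encoded in binary by the `d` address bits of `x`. -/
def addrVal (d : ℕ) (x : Fin (2 ^ d + d) → Bool) : ℕ :=
  ∑ j ∈ Finset.range d, if xAt d x j then 2 ^ j else 0

/-- The address function on `n = 2^d + d` variables: it returns the dedicated bit
indexed by the address encoded by the `d` address bits. -/
def addressFn (d : ℕ) (x : Fin (2 ^ d + d) → Bool) : Bool :=
  xAt d x (d + addrVal d x)

/-! An adaptive strategy reads the `d` address bits and then the addressed dedicated bit, so
`OPT_A ≤ d + 1`. A non-adaptive order `π` cannot stop before testing the addressed dedicated bit,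
since flipping that bit flips `f`. The `2^d` dedicated bits occupy distinct positions of `π` and
the address is uniformly distributed, so `OPT_N ≥ (1 + 2 + ⋯ + 2^d) / 2^d = (2^d + 1) / 2`.
Since `log₂ (2^d + d) ≥ d` and `2^d + d ≤ 2 · 2^d`, the constant `c = 1/6` works for `d ≥ 2`. -/

open Function

section Weights

variable {n : ℕ}

lemma sum_prodWeight (p : Fin n → ℝ) : ∑ x : Fin n → Bool, prodWeight n p x = 1 := by
  simp only [prodWeight, ← Fintype.prod_sum fun i (b : Bool) => if b then p i else 1 - p i]
  simp

lemma prodWeight_nonneg {p : Fin n → ℝ} (hp : ∀ i, p i ∈ Set.Icc 0 1) (x : Fin n → Bool) :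
    0 ≤ prodWeight n p x :=
  prod_nonneg fun i _ => by split <;> linarith [(hp i).1, (hp i).2]

lemma prodWeight_half (x : Fin n → Bool) : prodWeight n (fun _ => 1 / 2) x = (1 / 2) ^ n := by
  simp only [prodWeight, show (1 : ℝ) - 1 / 2 = 1 / 2 by norm_num, ite_self, prod_const,
    card_univ, Fintype.card_fin]

end Weights

namespace DecTree

variable {n : ℕ}

lemma costOn_nonneg {c : Fin n → ℝ} (hc : ∀ i, 0 ≤ c i) (t : DecTree n) (x : Fin n → Bool) :
    0 ≤ t.costOn c x := by
  induction t with
  | leaf => exact le_rfl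
  | node i t0 t1 ih0 ih1 =>
    simp only [costOn]
    split <;> linarith [hc i]

def readThen (k : (Fin n → Bool) → DecTree n) : List (Fin n) → (Fin n → Bool) → DecTree n
  | [], z => k z
  | i :: l, z => .node i (readThen k l (update z i false)) (readThen k l (update z i true))

lemma ite_mem_update_eq_ite_mem_cons (l : List (Fin n)) (i : Fin n) (x z : Fin n → Bool) :
    (fun j => if j ∈ l then x j else update z i (x i) j) =
      fun j => if j ∈ i :: l then x j else z j := by
  funext j
  by_cases hj : j = i
  · subst hj
    split <;> simp
  · simp [hj]

lemma eval_readThen (k : (Fin n → Bool) → DecTree n) (l : List (Fin n)) (z x : Fin n → Bool) :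
    (readThen k l z).eval x = (k fun i => if i ∈ l then x i else z i).eval x := by
  induction l generalizing z with
  | nil => simp [readThen]
  | cons i l ih =>
    rw [← ite_mem_update_eq_ite_mem_cons, ← ih]
    simp only [readThen, eval]
    cases x i <;> rfl

lemma costOn_readThen (c : Fin n → ℝ) (k : (Fin n → Bool) → DecTree n) (l : List (Fin n))
    (z x : Fin n → Bool) :
    (readThen k l z).costOn c x =
      (l.map c).sum + (k fun i => if i ∈ l then x i else z i).costOn c x := by
  induction l generalizing z with
  | nil => simp [readThen]
  | cons i l ih =>
    rw [← ite_mem_update_eq_ite_mem_cons, List.map_cons, List.sum_cons, add_assoc, ← ih]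
    simp only [readThen, costOn]
    cases x i <;> rfl

end DecTree

section Strategies

variable {n : ℕ} {f : (Fin n → Bool) → Bool} {c p : Fin n → ℝ}

lemma OPTA_le_adExpCost (hc : ∀ i, 0 ≤ c i) (hp : ∀ i, p i ∈ Set.Icc 0 1) {t : DecTree n}
    (ht : t.Computes f) : OPTA n f c p ≤ adExpCost n c p t := by
  refine csInf_le ⟨0, ?_⟩ ⟨t, ht, rfl⟩
  rintro _ ⟨t', -, rfl⟩
  exact sum_nonneg fun x _ => mul_nonneg (prodWeight_nonneg hp x) (t'.costOn_nonneg hc x)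

lemma adExpCost_eq_of_costOn_eq {t : DecTree n} {k : ℝ} (h : ∀ x, t.costOn c x = k) :
    adExpCost n c p t = k := by
  simp only [adExpCost, h, ← sum_mul, sum_prodWeight, one_mul]

lemma mem_of_determines {T : Finset (Fin n)} {x : Fin n → Bool} {i : Fin n}
    (hT : Determines n f T x) (hi : f (update x i (!x i)) ≠ f x) : i ∈ T := by
  by_contra hiT
  exact hi (hT _ fun j hj => update_of_ne (ne_of_mem_of_not_mem hj hiT) _ _)

lemma determines_prefixSet_naSteps (f : (Fin n → Bool) → Bool) (π : Equiv.Perm (Fin n))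
    (x : Fin n → Bool) : Determines n f (prefixSet n π (naSteps n f π x)) x :=
  Nat.sInf_mem (s := {k | Determines n f (prefixSet n π k) x})
    ⟨n, fun x' hx' => congrArg f (funext fun i => hx' i (by simp [prefixSet]))⟩

lemma card_prefixSet (π : Equiv.Perm (Fin n)) (k : ℕ) : #(prefixSet n π k) = min n k := by
  rw [← Fin.card_filter_val_lt]
  exact card_equiv π.symm (by simp [prefixSet])

lemma lt_naSteps_of_flip_ne {π : Equiv.Perm (Fin n)} {x : Fin n → Bool} {i : Fin n}
    (hi : f (update x i (!x i)) ≠ f x) : (π.symm i : ℕ) < naSteps n f π x := by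
  simpa [prefixSet] using mem_of_determines (determines_prefixSet_naSteps f π x) hi

lemma le_naCost_of_flip_ne {π : Equiv.Perm (Fin n)} {x : Fin n → Bool} {i : Fin n}
    (hi : f (update x i (!x i)) ≠ f x) : (π.symm i : ℝ) + 1 ≤ naCost n f (fun _ => 1) π x := by
  have := lt_naSteps_of_flip_ne (π := π) hi
  have := (π.symm i).isLt
  rw [naCost, sum_const, card_prefixSet, nsmul_one]
  exact_mod_cast (by omega : (π.symm i : ℕ) + 1 ≤ min n _)

end Strategies

lemma mul_add_one_le_two_mul_sum_of_injective {m : ℕ} {g : Fin m → ℕ} (hg : Injective g) :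
    m * (m + 1) ≤ 2 * ∑ i, (g i + 1) := by
  have h := Finset.sum_range_le_sum (s := univ.image fun i => (g i + 1 : ℤ)) (c := 1) (by simp)
  have hinj : Injective fun i => (g i + 1 : ℤ) := fun i j hij => hg (by simpa using hij)
  rw [card_image_of_injective _ hinj, sum_image fun i _ j _ hij => hinj hij, card_univ,
    Fintype.card_fin] at h
  have gauss : (∑ k ∈ range m, (k + 1)) * 2 = (m + 1) * m := by
    simpa [sum_range_succ'] using sum_range_id_mul_two (m + 1)
  zify at gauss ⊢
  simp only [add_comm (1 : ℤ)] at h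
  linarith

section Address

variable {d : ℕ}

def addressEquiv (d : ℕ) : ({j : Fin (2 ^ d + d) // (j : ℕ) < d} → Bool) ≃ Fin (2 ^ d) :=
  ((Fin.castLEquiv (Nat.le_add_left d _)).symm.arrowCongr finTwoEquiv.symm).trans
    finFunctionFinEquiv

lemma val_addressEquiv (x : Fin (2 ^ d + d) → Bool) :
    (addressEquiv d fun j => x j : ℕ) = addrVal d x := by
  rw [addressEquiv, Equiv.trans_apply, finFunctionFinEquiv_apply, addrVal,
    ← Fin.sum_univ_eq_sum_range]
  refine sum_congr rfl fun j _ => ?_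
  have hj : (j : ℕ) < 2 ^ d + d := j.isLt.trans_le (Nat.le_add_left d _)
  simp only [xAt, dif_pos hj, Equiv.arrowCongr_apply, comp_apply, Equiv.symm_symm]
  change (finTwoEquiv.symm (x ⟨j, hj⟩) : ℕ) * 2 ^ (j : ℕ) = _
  cases x ⟨j, hj⟩ <;> simp [finTwoEquiv]

lemma addrVal_lt (x : Fin (2 ^ d + d) → Bool) : addrVal d x < 2 ^ d :=
  val_addressEquiv x ▸ (addressEquiv d _).isLt

def addressedVar (x : Fin (2 ^ d + d) → Bool) : Fin (2 ^ d + d) :=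
  ⟨d + addrVal d x, by have := addrVal_lt x; omega⟩

lemma addressedVar_congr {x x' : Fin (2 ^ d + d) → Bool}
    (h : ∀ j : Fin (2 ^ d + d), (j : ℕ) < d → x j = x' j) : addressedVar x = addressedVar x' := by
  refine Fin.ext (congrArg (d + ·) ?_)
  rw [← val_addressEquiv, ← val_addressEquiv]
  congr 3
  exact funext fun j => h j j.2

lemma addressFn_eq (x : Fin (2 ^ d + d) → Bool) : addressFn d x = x (addressedVar x) :=
  dif_pos _

lemma addressFn_update_addressedVar (x : Fin (2 ^ d + d) → Bool) (b : Bool) :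
    addressFn d (update x (addressedVar x) b) = b := by
  have hvar : addressedVar (update x (addressedVar x) b) = addressedVar x := by
    refine addressedVar_congr fun j hj => update_of_ne ?_ _ _
    rintro rfl
    simp [addressedVar] at hj
  rw [addressFn_eq, hvar, update_self]

lemma sum_comp_addrVal (H : Fin (2 ^ d) → ℝ) :
    ∑ x : Fin (2 ^ d + d) → Bool, H ⟨addrVal d x, addrVal_lt x⟩ = 2 ^ 2 ^ d * ∑ v, H v := by
  have hcard : Fintype.card {j : Fin (2 ^ d + d) // d ≤ (j : ℕ)} = 2 ^ d := by
    simp only [← not_lt]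
    rw [Fintype.card_subtype_compl, ← Fintype.card_congr (Fin.castLEquiv (Nat.le_add_left d _))]
    simp
  calc ∑ x : Fin (2 ^ d + d) → Bool, H ⟨addrVal d x, addrVal_lt x⟩
      = ∑ x : Fin (2 ^ d + d) → Bool, H (addressEquiv d fun j => x j) :=
        sum_congr rfl fun x _ => congrArg H (Fin.ext (val_addressEquiv x).symm)
    _ = ∑ zw : ({j : Fin (2 ^ d + d) // (j : ℕ) < d} → Bool) ×
          ({j : Fin (2 ^ d + d) // ¬(j : ℕ) < d} → Bool), H (addressEquiv d zw.1) :=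
        Fintype.sum_equiv (Equiv.piEquivPiSubtypeProd _ _) _ _ fun _ => rfl
    _ = 2 ^ 2 ^ d * ∑ v, H v := by
        simp [Fintype.sum_prod_type, hcard, ← mul_sum, Equiv.sum_comp]

def addressTree (d : ℕ) : DecTree (2 ^ d + d) :=
  DecTree.readThen (fun z => .node (addressedVar z) (.leaf false) (.leaf true))
    ((List.finRange d).map (Fin.castLE (Nat.le_add_left d _))) fun _ => false

lemma addressTree_computes : (addressTree d).Computes (addressFn d) := by
  intro x
  rw [addressTree, DecTree.eval_readThen, addressFn_eq,
    addressedVar_congr (x' := x) fun j hj => if_pos (by simpa using ⟨⟨j, hj⟩, rfl⟩)]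
  simp only [DecTree.eval]
  cases x (addressedVar x) <;> rfl

lemma costOn_addressTree (x : Fin (2 ^ d + d) → Bool) :
    (addressTree d).costOn (fun _ => 1) x = d + 1 := by
  simp [addressTree, DecTree.costOn_readThen, DecTree.costOn, comp_def]

end Address

lemma OPTA_addressFn_le (d : ℕ) :
    OPTA (2 ^ d + d) (addressFn d) (fun _ => 1) (fun _ => 1 / 2) ≤ d + 1 :=
  (OPTA_le_adExpCost (fun _ => zero_le_one) (fun _ => by norm_num) addressTree_computes).trans_eq
    (adExpCost_eq_of_costOn_eq costOn_addressTree)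

lemma OPTN_addressFn_ge (d : ℕ) :
    ((2 : ℝ) ^ d + 1) / 2 ≤ OPTN (2 ^ d + d) (addressFn d) (fun _ => 1) (fun _ => 1 / 2) := by
  refine le_csInf ⟨_, 1, rfl⟩ ?_
  rintro _ ⟨π, rfl⟩
  let pos : Fin (2 ^ d) → ℕ := fun v => π.symm ⟨d + v, by omega⟩
  have hpos : Injective pos := fun v w h => by
    simpa [pos, Fin.ext_iff] using π.symm.injective (Fin.ext h)
  have hsum : (2 : ℝ) ^ d * (2 ^ d + 1) ≤ 2 * ∑ v, ((pos v : ℝ) + 1) := by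
    exact_mod_cast mul_add_one_le_two_mul_sum_of_injective hpos
  calc ((2 : ℝ) ^ d + 1) / 2
      ≤ (1 / 2) ^ d * ∑ v, ((pos v : ℝ) + 1) := by
        rw [one_div_pow, one_div_mul_eq_div, le_div_iff₀ (by positivity)]
        linarith
    _ = (1 / 2) ^ (2 ^ d + d) * ∑ x, ((pos ⟨addrVal d x, addrVal_lt x⟩ : ℝ) + 1) := by
        rw [sum_comp_addrVal (fun v => (pos v : ℝ) + 1), pow_add, mul_comm ((1 / 2 : ℝ) ^ 2 ^ d),
          mul_assoc, ← mul_assoc ((1 / 2 : ℝ) ^ 2 ^ d), ← mul_pow]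
        norm_num
    _ ≤ (1 / 2) ^ (2 ^ d + d) * ∑ x, naCost (2 ^ d + d) (addressFn d) (fun _ => 1) π x := by
        gcongr with x
        refine le_naCost_of_flip_ne (i := addressedVar x) ?_
        rw [addressFn_update_addressedVar, addressFn_eq]
        exact Bool.not_ne_self _
    _ = naExpCost (2 ^ d + d) (addressFn d) (fun _ => 1) (fun _ => 1 / 2) π := by
        simp only [naExpCost, prodWeight_half, mul_sum]

lemma le_logb_two_pow_add (d : ℕ) : (d : ℝ) ≤ Real.logb 2 ((2 ^ d + d : ℕ) : ℝ) := by
  rw [Real.le_logb_iff_rpow_le (by norm_num) (by positivity), Real.rpow_natCast]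
  exact_mod_cast Nat.le_add_right _ _

/-- There is a constant `c > 0` such that for every `d ≥ 2`, with `n = 2^d + d` and `f`
the address function on `n` variables, under unit costs and the uniform distribution
`OPT_N(f) ≥ c·(n / log₂ n)·OPT_A(f)`. -/
theorem stmt13 :
    ∃ c : ℝ, 0 < c ∧
      ∀ d : ℕ, 2 ≤ d →
        c * (((2 ^ d + d : ℕ) : ℝ) / Real.logb 2 ((2 ^ d + d : ℕ) : ℝ)) *
            OPTA (2 ^ d + d) (addressFn d) (fun _ => 1) (fun _ => 1/2) ≤
          OPTN (2 ^ d + d) (addressFn d) (fun _ => 1) (fun _ => 1/2) := by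
  refine ⟨1 / 6, by norm_num, fun d hd => ?_⟩
  have hd' : (2 : ℝ) ≤ d := by exact_mod_cast hd
  have hN : ((2 ^ d + d : ℕ) : ℝ) ≤ 2 * 2 ^ d := by
    have : (d : ℝ) ≤ 2 ^ d := by exact_mod_cast Nat.lt_two_pow_self.le
    push_cast
    linarith
  have hL := le_logb_two_pow_add d
  calc 1 / 6 * (((2 ^ d + d : ℕ) : ℝ) / Real.logb 2 ((2 ^ d + d : ℕ) : ℝ)) *
          OPTA (2 ^ d + d) (addressFn d) (fun _ => 1) (fun _ => 1 / 2)
      ≤ 1 / 6 * (((2 ^ d + d : ℕ) : ℝ) / Real.logb 2 ((2 ^ d + d : ℕ) : ℝ)) * (d + 1) := by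
        refine mul_le_mul_of_nonneg_left (OPTA_addressFn_le d) ?_
        exact mul_nonneg (by norm_num) (div_nonneg (by positivity) (by linarith))
    _ ≤ 1 / 6 * (2 * 2 ^ d / d) * (d + 1) := by gcongr
    _ ≤ ((2 : ℝ) ^ d + 1) / 2 := by
        rw [show (1 / 6 : ℝ) * (2 * 2 ^ d / d) * (d + 1) = 2 ^ d * (d + 1) / (3 * d) by
          field_simp; ring, div_le_div_iff₀ (by positivity) (by norm_num)]
        nlinarith [mul_le_mul_of_nonneg_left hd' (by positivity : (0 : ℝ) ≤ 2 ^ d)]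
    _ ≤ _ := OPTN_addressFn_ge d
end

section
/- Let f : {0,1}^n → {0,1} be a monotone read-once DNF in which every term contains at most w variables, where w ≥ 1 is an integer. Under unit costs and the uniform distribution, there is a non-adaptive strategy S whose expected cost is at most w · OPT_A(f); in particular OPT_N(f) ≤ w · OPT_A(f). -/
open Finset

/-!
The non-adaptive strategy evaluates the terms completely, one after the other in increasing
order of size, until one of them is true; its expected cost is `C(D) = termwiseCost (D.sort)`,
`D` the multiset of term sizes. The adaptive lower bound is a potential argument: on a subcube
the DNF restricts to a read-once DNF whose term sizes `D` are the unfixed parts of the terms not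
yet falsified, and querying a variable of such a term of size `d + 1` leaves, with probability
`1/2` each, the sizes `D - {d + 1}` or `D - {d + 1} + {d}`. For `d + 1 ≤ w` the inequality
`C(D + {d + 1}) ≤ w + (C(D) + C(D + {d})) / 2` holds (an exchange argument on sorted lists), so
induction over any decision tree, along subcubes, bounds its expected cost below by `C / w`.
-/

noncomputable def termFalseProb (d : ℕ) : ℝ := 1 - (1 / 2) ^ d

lemma termFalseProb_nonneg (d : ℕ) : 0 ≤ termFalseProb d :=
  sub_nonneg.2 (pow_le_one₀ (by norm_num) (by norm_num))

lemma termFalseProb_le_one (d : ℕ) : termFalseProb d ≤ 1 :=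
  sub_le_self _ (by positivity)

lemma termFalseProb_zero : termFalseProb 0 = 0 := by simp [termFalseProb]

lemma termFalseProb_succ (d : ℕ) : termFalseProb (d + 1) = (1 + termFalseProb d) / 2 := by
  simp only [termFalseProb, pow_succ]; ring

/-- Expected number of queries made by evaluating terms of the given sizes completely, one after
the other, until one of them is true. -/
noncomputable def termwiseCost : List ℕ → ℝ
  | [] => 0
  | d :: L => d + termFalseProb d * termwiseCost L

lemma termwiseCost_nonneg : ∀ L : List ℕ, 0 ≤ termwiseCost L
  | [] => le_rfl
  | d :: L => add_nonneg d.cast_nonneg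
      (mul_nonneg (termFalseProb_nonneg d) (termwiseCost_nonneg L))

/-- Exchange argument: a term of size `e ≤ d` is better evaluated before one of size `d`. -/
lemma natCast_mul_termFalseProb_le {d e : ℕ} (h : e ≤ d) :
    (e : ℝ) * (1 - termFalseProb d) ≤ d * (1 - termFalseProb e) := by
  simp only [termFalseProb, sub_sub_cancel]
  exact mul_le_mul (Nat.cast_le.2 h) (pow_le_pow_of_le_one (by norm_num) (by norm_num) h)
    (by positivity) (by positivity)

lemma termwiseCost_orderedInsert_le (d : ℕ) :
    ∀ L : List ℕ, L.Pairwise (· ≤ ·) →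
      termwiseCost (L.orderedInsert (· ≤ ·) d) ≤ d + termFalseProb d * termwiseCost L
  | [], _ => by simp [termwiseCost]
  | e :: L, hL => by
    by_cases hde : d ≤ e
    · simp [List.orderedInsert, hde, termwiseCost]
    · have ih := termwiseCost_orderedInsert_le d L hL.of_cons
      have hex := natCast_mul_termFalseProb_le (le_of_not_ge hde)
      simp only [List.orderedInsert, hde, if_false, termwiseCost]
      nlinarith [mul_le_mul_of_nonneg_left ih (termFalseProb_nonneg e), termwiseCost_nonneg L]

lemma termwiseCost_orderedInsert_succ_le {w d : ℕ} (hd : d + 1 ≤ w) :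
    ∀ L : List ℕ, L.Pairwise (· ≤ ·) →
      termwiseCost (L.orderedInsert (· ≤ ·) (d + 1)) ≤
        w + (termwiseCost L + termwiseCost (L.orderedInsert (· ≤ ·) d)) / 2
  | [], _ => by
    have : ((d : ℝ) + 1) ≤ w := by exact_mod_cast hd
    simp only [List.orderedInsert, termwiseCost]
    push_cast
    linarith [termFalseProb_nonneg d]
  | e :: L, hL => by
    have ih := termwiseCost_orderedInsert_succ_le hd L hL.of_cons
    have hw : ((d : ℝ) + 1) ≤ w := by exact_mod_cast hd
    have hw₀ : (0 : ℝ) ≤ w := by linarith [d.cast_nonneg (α := ℝ)]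
    have hqe₀ := termFalseProb_nonneg e
    have hqe₁ := termFalseProb_le_one e
    by_cases h1 : d + 1 ≤ e
    · simp only [List.orderedInsert, h1, (by omega : d ≤ e), if_true, termwiseCost,
        termFalseProb_succ]
      push_cast
      nlinarith [mul_le_mul_of_nonneg_right hqe₁ (termwiseCost_nonneg (e :: L))]
    · by_cases h2 : d ≤ e
      · obtain rfl : e = d := by omega
        have hins := termwiseCost_orderedInsert_le e L hL.of_cons
        simp only [List.orderedInsert, h1, h2, if_true, if_false, termwiseCost]
        nlinarith [mul_le_mul_of_nonneg_left ih hqe₀, mul_le_mul_of_nonneg_left hins hqe₀,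
          mul_le_mul_of_nonneg_left hins (mul_nonneg hqe₀ hqe₀),
          mul_le_mul_of_nonneg_right hqe₁ hw₀,
          termwiseCost_nonneg (L.orderedInsert (· ≤ ·) e)]
      · simp only [List.orderedInsert, h1, h2, if_false, termwiseCost]
        nlinarith [mul_le_mul_of_nonneg_left ih hqe₀,
          mul_le_mul_of_nonneg_right hqe₁ hw₀]

lemma Multiset.sort_cons_eq_orderedInsert {α : Type*} [LinearOrder α] (a : α)
    (s : Multiset α) : (a ::ₘ s).sort = s.sort.orderedInsert (· ≤ ·) a := by
  refine List.Perm.eq_of_pairwise' (Multiset.pairwise_sort _ _)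
    ((Multiset.pairwise_sort _ _).orderedInsert a _) ?_
  refine (Multiset.coe_eq_coe.1 ?_).trans (List.perm_orderedInsert _ _ _).symm
  rw [Multiset.sort_eq, ← Multiset.cons_coe, Multiset.sort_eq]

noncomputable def sortedTermwiseCost (D : Multiset ℕ) : ℝ := termwiseCost D.sort

lemma sortedTermwiseCost_cons_succ_le {w d : ℕ} (hd : d + 1 ≤ w) (D : Multiset ℕ) :
    sortedTermwiseCost ((d + 1) ::ₘ D) ≤
      w + (sortedTermwiseCost D + sortedTermwiseCost (d ::ₘ D)) / 2 := by
  simp only [sortedTermwiseCost, Multiset.sort_cons_eq_orderedInsert]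
  exact termwiseCost_orderedInsert_succ_le hd _ (Multiset.pairwise_sort _ _)

lemma sortedTermwiseCost_eq_zero_of_zero_mem {D : Multiset ℕ} (h : 0 ∈ D) :
    sortedTermwiseCost D = 0 := by
  rw [sortedTermwiseCost, ← Multiset.cons_erase h,
    Multiset.sort_cons _ _ _ (fun b _ => Nat.zero_le b)]
  simp [termwiseCost, termFalseProb_zero]

section Cube

variable {n : ℕ}

def cube (E : Finset (Fin n)) (y : Fin n → Bool) : Finset (Fin n → Bool) :=
  Finset.univ.filter fun x => ∀ i ∈ E, x i = y i

lemma mem_cube {E : Finset (Fin n)} {y x : Fin n → Bool} :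
    x ∈ cube E y ↔ ∀ i ∈ E, x i = y i := by
  simp [cube]

@[simp] lemma cube_empty (y : Fin n → Bool) : cube ∅ y = Finset.univ := by
  ext; simp [mem_cube]

lemma card_cube_mul_two_pow (E : Finset (Fin n)) (y : Fin n → Bool) :
    ((cube E y).card : ℝ) * 2 ^ E.card = 2 ^ n := by
  have : cube E y = Fintype.piFinset fun i => if i ∈ E then {y i} else Finset.univ := by
    ext x; simp only [mem_cube, Fintype.mem_piFinset]
    refine forall_congr' fun i => ?_
    split_ifs <;> simp [*]
  rw [this, Fintype.card_piFinset]
  simp [apply_ite Finset.card, Finset.prod_ite, Finset.filter_notMem_eq_sdiff, ← pow_add,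
    Finset.card_sdiff_add_card_eq_card]

lemma cube_congr {E : Finset (Fin n)} {y y' : Fin n → Bool} (h : ∀ i ∈ E, y i = y' i) :
    cube E y = cube E y' := by
  ext x; simp only [mem_cube]
  exact forall₂_congr fun i hi => by rw [h i hi]

lemma cube_union (E P : Finset (Fin n)) (y : Fin n → Bool) :
    cube (E ∪ P) y = (cube E y).filter fun x => ∀ i ∈ P, x i = y i := by
  ext x; simp [mem_cube, or_imp, forall_and]

lemma cube_insert {E : Finset (Fin n)} {i : Fin n} (hi : i ∉ E) (y : Fin n → Bool) (b : Bool) :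
    cube (insert i E) (Function.update y i b) = (cube E y).filter fun x => x i = b := by
  rw [Finset.insert_eq, Finset.union_comm, cube_union, cube_congr (y' := y)]
  · simp
  · intro j hj; rw [Function.update_of_ne (ne_of_mem_of_not_mem hj hi)]

lemma mem_cube_insert {E : Finset (Fin n)} {i : Fin n} (hi : i ∉ E) {y x : Fin n → Bool}
    {b : Bool} : x ∈ cube (insert i E) (Function.update y i b) ↔ x ∈ cube E y ∧ x i = b := by
  rw [cube_insert hi, Finset.mem_filter]

lemma card_cube_insert_mul_two_pow {E : Finset (Fin n)} {i : Fin n} (hi : i ∉ E)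
    (y : Fin n → Bool) (b : Bool) :
    ((cube (insert i E) (Function.update y i b)).card : ℝ) * 2 ^ E.card = 2 ^ n / 2 := by
  rw [← card_cube_mul_two_pow (insert i E) (Function.update y i b),
    Finset.card_insert_of_notMem hi, pow_succ]
  ring

lemma sum_cube_eq_sum_bool {E : Finset (Fin n)} {i : Fin n} (hi : i ∉ E) (y : Fin n → Bool)
    (g : (Fin n → Bool) → ℝ) :
    ∑ x ∈ cube E y, g x = ∑ b : Bool, ∑ x ∈ cube (insert i E) (Function.update y i b), g x := by
  rw [Fintype.sum_bool, cube_insert hi, cube_insert hi,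
    ← Finset.sum_filter_add_sum_filter_not (cube E y) (fun x => x i = true)]
  simp

end Cube

namespace DecTree

variable {n : ℕ}

lemma eval_node (i : Fin n) (t₀ t₁ : DecTree n) (x : Fin n → Bool) :
    (node i t₀ t₁).eval x = (bif x i then t₁ else t₀).eval x := by
  cases h : x i <;> simp [h, DecTree.eval]

lemma costOn_node (c : Fin n → ℝ) (i : Fin n) (t₀ t₁ : DecTree n) (x : Fin n → Bool) :
    (node i t₀ t₁).costOn c x = c i + (bif x i then t₁ else t₀).costOn c x := by
  cases h : x i <;> simp [h, DecTree.costOn]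

lemma sum_cube_costOn_node {E : Finset (Fin n)} {i : Fin n} (hi : i ∉ E) (y : Fin n → Bool)
    (t₀ t₁ : DecTree n) :
    ∑ x ∈ cube E y, (node i t₀ t₁).costOn (fun _ => 1) x =
      ∑ b : Bool, (((cube (insert i E) (Function.update y i b)).card : ℝ) +
        ∑ x ∈ cube (insert i E) (Function.update y i b),
          (bif b then t₁ else t₀).costOn (fun _ => 1) x) := by
  rw [sum_cube_eq_sum_bool hi]
  refine Fintype.sum_congr _ _ fun b => ?_
  rw [Finset.cast_card, ← Finset.sum_add_distrib]
  refine Finset.sum_congr rfl fun x hx => ?_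
  rw [costOn_node, ((mem_cube_insert hi).1 hx).2]

variable (f : (Fin n → Bool) → Bool)

def fullTree : List (Fin n) → (Fin n → Bool) → DecTree n
  | [], y => .leaf (f y)
  | i :: l, y => .node i (fullTree l (Function.update y i false))
      (fullTree l (Function.update y i true))

lemma eval_fullTree : ∀ (l : List (Fin n)) (y x : Fin n → Bool), (∀ i ∉ l, x i = y i) →
    (fullTree f l y).eval x = f x
  | [], y, x, h => by
    rw [fullTree, DecTree.eval, funext fun i => h i List.not_mem_nil]
  | i :: l, y, x, h => by
    rw [fullTree, DecTree.eval_node]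
    cases hxi : x i <;>
    · refine eval_fullTree l _ x fun k hk => ?_
      rcases eq_or_ne k i with rfl | hki
      · simp [hxi]
      · rw [Function.update_of_ne hki, h k (by simp [hki, hk])]

lemma exists_computes : ∃ t : DecTree n, t.Computes f :=
  ⟨fullTree f (List.finRange n) fun _ => false, fun x =>
    eval_fullTree f _ _ x fun i hi => absurd (List.mem_finRange i) hi⟩

end DecTree

section Residual

variable {n m : ℕ} (T : Fin m → Finset (Fin n))

def IsLive (E : Finset (Fin n)) (y : Fin n → Bool) (j : Fin m) : Prop :=
  ∀ i ∈ T j, i ∈ E → y i = true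

open Classical in
noncomputable def residualTerm (E : Finset (Fin n)) (y : Fin n → Bool) (j : Fin m) :
    Multiset ℕ :=
  if IsLive T E y j then {(T j \ E).card} else 0

/-- On `cube E y` the DNF restricts to a read-once DNF with these term sizes. -/
noncomputable def residualSizes (E : Finset (Fin n)) (y : Fin n → Bool) : Multiset ℕ :=
  ∑ j, residualTerm T E y j

variable {T}

lemma residualSizes_empty (y : Fin n → Bool) :
    residualSizes T ∅ y = Finset.univ.val.map fun j => (T j).card := by
  have : ∀ j, IsLive T ∅ y j := fun j i _ hi => absurd hi (Finset.notMem_empty i)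
  simp only [residualSizes, residualTerm, this, if_true, Finset.sdiff_empty,
    Finset.sum_eq_multiset_sum]
  conv_rhs => rw [← Multiset.sum_map_singleton (Multiset.map _ _), Multiset.map_map]
  rfl

section Transition

variable {E : Finset (Fin n)} {y : Fin n → Bool} {i : Fin n} {j : Fin m}

lemma IsLive.of_insert_update (hi : i ∉ E) {b : Bool}
    (h : IsLive T (insert i E) (Function.update y i b) j) : IsLive T E y j := by
  intro k hk hkE
  have hki : k ≠ i := ne_of_mem_of_not_mem hkE hi
  simpa [Function.update_of_ne hki] using h k hk (Finset.mem_insert_of_mem hkE)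

lemma isLive_insert_update_iff (hij : i ∉ T j) (b : Bool) :
    IsLive T (insert i E) (Function.update y i b) j ↔ IsLive T E y j :=
  forall₂_congr fun k hk => by
    have hki : k ≠ i := ne_of_mem_of_not_mem hk hij
    simp [hki]

lemma residualTerm_insert_update (hi : i ∉ E) (h : i ∈ T j → ¬ IsLive T E y j) (b : Bool) :
    residualTerm T (insert i E) (Function.update y i b) j = residualTerm T E y j := by
  by_cases hlive : IsLive T E y j
  · have hij : i ∉ T j := fun hij => h hij hlive
    rw [residualTerm, residualTerm, if_pos hlive, if_pos ((isLive_insert_update_iff hij b).2 hlive),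
      Finset.sdiff_insert_of_notMem hij]
  · simp only [residualTerm, hlive, mt (IsLive.of_insert_update hi) hlive, if_false]

lemma residualTerm_insert_update_false (hij : i ∈ T j) :
    residualTerm T (insert i E) (Function.update y i false) j = 0 :=
  if_neg fun hlive => by simpa using hlive i hij (Finset.mem_insert_self i E)

lemma residualTerm_insert_update_true (hi : i ∉ E) (hij : i ∈ T j) (hlive : IsLive T E y j) :
    residualTerm T (insert i E) (Function.update y i true) j = {(T j \ insert i E).card} := by
  refine if_pos fun k hk hkE => ?_
  rcases eq_or_ne k i with rfl | hki
  · simp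
  · rw [Function.update_of_ne hki]
    exact hlive k hk ((Finset.mem_insert.1 hkE).resolve_left hki)

lemma card_sdiff_insert_add_one (hi : i ∉ E) (hij : i ∈ T j) :
    (T j \ insert i E).card + 1 = (T j \ E).card := by
  rw [Finset.sdiff_insert, Finset.card_erase_add_one (Finset.mem_sdiff.2 ⟨hij, hi⟩)]

end Transition

variable {w : ℕ}

lemma sortedTermwiseCost_residualSizes_le_query
    (hdisj : ∀ j k, j ≠ k → Disjoint (T j) (T k)) (hwidth : ∀ j, (T j).card ≤ w)
    {E : Finset (Fin n)} {i : Fin n} (hi : i ∉ E) (y : Fin n → Bool) :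
    sortedTermwiseCost (residualSizes T E y) ≤ w +
      (sortedTermwiseCost (residualSizes T (insert i E) (Function.update y i false)) +
        sortedTermwiseCost (residualSizes T (insert i E) (Function.update y i true))) / 2 := by
  classical
  by_cases h : ∃ j, i ∈ T j ∧ IsLive T E y j
  · obtain ⟨j, hij, hlive⟩ := h
    have hsplit : ∀ E' y', residualSizes T E' y' =
        residualTerm T E' y' j + ∑ k ∈ Finset.univ.erase j, residualTerm T E' y' k :=
      fun E' y' => (Finset.add_sum_erase _ _ (Finset.mem_univ j)).symm
    have hothers : ∀ b, ∑ k ∈ Finset.univ.erase j,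
        residualTerm T (insert i E) (Function.update y i b) k =
          ∑ k ∈ Finset.univ.erase j, residualTerm T E y k := fun b =>
      Finset.sum_congr rfl fun k hk => residualTerm_insert_update hi
        (fun hik _ => Finset.disjoint_left.1 (hdisj k j (Finset.ne_of_mem_erase hk)) hik hij) b
    have hcard := card_sdiff_insert_add_one hi hij
    rw [hsplit, hsplit, hsplit, hothers, hothers, residualTerm_insert_update_false hij,
      residualTerm_insert_update_true hi hij hlive, residualTerm, if_pos hlive, ← hcard,
      zero_add, Multiset.singleton_add, Multiset.singleton_add]
    refine sortedTermwiseCost_cons_succ_le ?_ _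
    exact hcard.trans_le ((Finset.card_le_card Finset.sdiff_subset).trans (hwidth j))
  · simp only [not_exists, not_and] at h
    have hsame : ∀ b, residualSizes T (insert i E) (Function.update y i b) = residualSizes T E y :=
      fun b => Finset.sum_congr rfl fun j _ => residualTerm_insert_update hi (h j) b
    rw [hsame, hsame]
    linarith [w.cast_nonneg (α := ℝ)]

/-- If `f` agrees at the two extreme points of the cube, either some live term is fully fixed
(a residual size `0`) or no term is live. -/
lemma sortedTermwiseCost_residualSizes_eq_zero {f : (Fin n → Bool) → Bool}
    (hf : ∀ x, f x = true ↔ ∃ j, ∀ i ∈ T j, x i = true) (E : Finset (Fin n)) (y : Fin n → Bool)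
    (h : f (fun i => if i ∈ E then y i else false) = f (fun i => if i ∈ E then y i else true)) :
    sortedTermwiseCost (residualSizes T E y) = 0 := by
  cases hf₀ : f (fun i => if i ∈ E then y i else false)
  · have hdead : ∀ j, ¬ IsLive T E y j := fun j hlive => by
      refine Bool.false_ne_true (hf₀.symm.trans h |>.trans ((hf _).2 ⟨j, fun k hk => ?_⟩))
      by_cases hkE : k ∈ E <;> simp [hkE, hlive k hk]
    rw [show residualSizes T E y = 0 from Finset.sum_eq_zero fun j _ => if_neg (hdead j)]
    simp [sortedTermwiseCost, termwiseCost]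
  · obtain ⟨j, hj⟩ := (hf _).1 hf₀
    have hlive : IsLive T E y j := fun k hk hkE => by simpa [hkE] using hj k hk
    have hcovered : T j \ E = ∅ := Finset.sdiff_eq_empty_iff_subset.2 fun k hk => by
      by_contra hkE; simpa [hkE] using hj k hk
    refine sortedTermwiseCost_eq_zero_of_zero_mem (Multiset.mem_sum.2 ⟨j, Finset.mem_univ j, ?_⟩)
    simp [residualTerm, hlive, hcovered]

theorem sortedTermwiseCost_residualSizes_mul_le {f : (Fin n → Bool) → Bool}
    (hdisj : ∀ j k, j ≠ k → Disjoint (T j) (T k)) (hwidth : ∀ j, (T j).card ≤ w)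
    (hf : ∀ x, f x = true ↔ ∃ j, ∀ i ∈ T j, x i = true) (t : DecTree n) :
    ∀ (E : Finset (Fin n)) (y : Fin n → Bool), (∀ x ∈ cube E y, t.eval x = f x) →
      sortedTermwiseCost (residualSizes T E y) * 2 ^ n ≤
        w * 2 ^ E.card * ∑ x ∈ cube E y, t.costOn (fun _ => 1) x := by
  induction t with
  | leaf b =>
    intro E y ht
    have hx : ∀ c : Bool, (fun i => if i ∈ E then y i else c) ∈ cube E y :=
      fun c => mem_cube.2 fun i hi => if_pos hi
    rw [sortedTermwiseCost_residualSizes_eq_zero hf E y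
      ((ht _ (hx false)).symm.trans (ht _ (hx true)))]
    simp [DecTree.costOn]
  | node i t₀ t₁ ih₀ ih₁ =>
    intro E y ht
    have ih : ∀ b E y, (∀ x ∈ cube E y, (bif b then t₁ else t₀).eval x = f x) →
        sortedTermwiseCost (residualSizes T E y) * 2 ^ n ≤
          w * 2 ^ E.card * ∑ x ∈ cube E y, (bif b then t₁ else t₀).costOn (fun _ => 1) x := by
      intro b; cases b; exacts [ih₀, ih₁]
    by_cases hi : i ∈ E
    · have hxi : ∀ x ∈ cube E y, x i = y i := fun x hx => mem_cube.1 hx i hi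
      refine (ih (y i) E y fun x hx => ?_).trans ?_
      · rw [← hxi x hx, ← DecTree.eval_node]; exact ht x hx
      · gcongr with x hx
        rw [DecTree.costOn_node, hxi x hx]; linarith
    · have hchild : ∀ b, sortedTermwiseCost (residualSizes T (insert i E) (Function.update y i b))
          * 2 ^ n / 2 ≤ w * 2 ^ E.card * ∑ x ∈ cube (insert i E) (Function.update y i b),
            (bif b then t₁ else t₀).costOn (fun _ => 1) x := fun b => by
        have := ih b (insert i E) (Function.update y i b) fun x hx => by
          obtain ⟨hxE, rfl⟩ := (mem_cube_insert hi).1 hx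
          rw [← DecTree.eval_node]; exact ht x hxE
        rw [Finset.card_insert_of_notMem hi, pow_succ] at this
        linarith
      have hhalf : ∀ b, (w : ℝ) * 2 ^ E.card * (cube (insert i E) (Function.update y i b)).card =
          w * (2 ^ n / 2) := fun b => by
        rw [← card_cube_insert_mul_two_pow hi y b]; ring
      have hquery := sortedTermwiseCost_residualSizes_le_query hdisj hwidth hi y
      rw [DecTree.sum_cube_costOn_node hi, Fintype.sum_bool, mul_add, mul_add, mul_add, hhalf,
        hhalf]
      nlinarith [hchild true, hchild false,
        mul_le_mul_of_nonneg_right hquery (by positivity : (0 : ℝ) ≤ 2 ^ n)]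

end Residual

section NonAdaptive

variable {n : ℕ}

lemma prefixSet_eq_toFinset_take (π : Equiv.Perm (Fin n)) (k : ℕ) :
    prefixSet n π k = ((List.ofFn π).take k).toFinset := by
  ext i
  simp only [prefixSet, Finset.mem_filter, Finset.mem_univ, true_and, List.mem_toFinset,
    List.mem_take_iff_getElem, List.length_ofFn, List.getElem_ofFn]
  constructor
  · intro h
    exact ⟨(π.symm i).val, by omega, by simp⟩
  · rintro ⟨q, hq, rfl⟩
    simp only [Equiv.symm_apply_apply]
    omega

lemma card_prefixSet_le (π : Equiv.Perm (Fin n)) (k : ℕ) : (prefixSet n π k).card ≤ k := by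
  rw [prefixSet_eq_toFinset_take]
  exact (List.toFinset_card_le _).trans (List.length_take_le _ _)

lemma naCost_le_of_determines {f : (Fin n → Bool) → Bool} {π : Equiv.Perm (Fin n)}
    {x : Fin n → Bool} {k : ℕ} (hk : Determines n f (prefixSet n π k) x) :
    naCost n f (fun _ => 1) π x ≤ k := by
  rw [naCost, Finset.sum_const, nsmul_one, Nat.cast_le]
  exact (card_prefixSet_le π _).trans (Nat.sInf_le hk)

lemma exists_perm_prefix_ofFn {l : List (Fin n)} (hl : l.Nodup) :
    ∃ π : Equiv.Perm (Fin n), l <+: List.ofFn π := by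
  classical
  set vars := l ++ (Finset.univ \ l.toFinset).toList
  have hnd : vars.Nodup := hl.append (Finset.nodup_toList _) fun a ha hb => by
    simp_all
  have hall : ∀ i, i ∈ vars := fun i => by by_cases hi : i ∈ l <;> simp [vars, hi]
  have hlen : vars.length = n := by
    simpa using (List.toFinset_card_of_nodup hnd).symm.trans
      (congrArg Finset.card (Finset.eq_univ_of_forall fun i => List.mem_toFinset.2 (hall i)))
  refine ⟨(finCongr hlen.symm).trans (hnd.getEquivOfForallMemList _ hall), ?_⟩
  have : List.ofFn ((finCongr hlen.symm).trans (hnd.getEquivOfForallMemList _ hall)) = vars := by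
    apply List.ext_getElem (by simp [hlen])
    intro k h₁ h₂
    simp
  rw [this]
  exact List.prefix_append _ _

end NonAdaptive

section Termwise

variable {n m : ℕ} (T : Fin m → Finset (Fin n))

noncomputable def termwiseTested : List (Fin m) → (Fin n → Bool) → List (Fin n)
  | [], _ => []
  | j :: L, x => (T j).toList ++ if ∀ i ∈ T j, x i = true then [] else termwiseTested L x

variable {T}

lemma termwiseTested_prefix (x : Fin n → Bool) :
    ∀ L : List (Fin m), termwiseTested T L x <+: L.flatMap fun j => (T j).toList
  | [] => List.nil_prefix
  | j :: L => by
    rw [termwiseTested, List.flatMap_cons, List.prefix_append_right_inj]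
    split_ifs
    exacts [List.nil_prefix, termwiseTested_prefix x L]

lemma exists_true_or_forall_mem_termwiseTested (x : Fin n → Bool) :
    ∀ L : List (Fin m),
      (∃ j, (∀ i ∈ T j, x i = true) ∧ ∀ i ∈ T j, i ∈ termwiseTested T L x) ∨
        ∀ j ∈ L, ∀ i ∈ T j, i ∈ termwiseTested T L x
  | [] => Or.inr fun _ h => absurd h List.not_mem_nil
  | j :: L => by
    by_cases hj : ∀ i ∈ T j, x i = true
    · exact Or.inl ⟨j, hj, fun i hi => by simp [termwiseTested, hi]⟩
    · rcases exists_true_or_forall_mem_termwiseTested x L with ⟨k, hk, hsub⟩ | hsub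
      · exact Or.inl ⟨k, hk, fun i hi => by simp [termwiseTested, hj, hsub i hi]⟩
      · refine Or.inr fun k hk i hi => ?_
        rcases List.mem_cons.1 hk with rfl | hk
        · simp [termwiseTested, hi]
        · simp [termwiseTested, hj, hsub k hk i hi]

lemma determines_termwiseTested {f : (Fin n → Bool) → Bool}
    (hf : ∀ x, f x = true ↔ ∃ j, ∀ i ∈ T j, x i = true) {L : List (Fin m)}
    (hL : ∀ j, j ∈ L) (x : Fin n → Bool) :
    Determines n f (termwiseTested T L x).toFinset x := by
  intro x' hx'
  simp only [List.mem_toFinset] at hx'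
  rcases exists_true_or_forall_mem_termwiseTested x L with ⟨j, hj, hsub⟩ | hsub
  · rw [(hf x).2 ⟨j, hj⟩, hf]
    exact ⟨j, fun i hi => (hx' i (hsub i hi)).trans (hj i hi)⟩
  · rw [Bool.eq_iff_iff, hf, hf]
    exact exists_congr fun j => forall₂_congr fun i hi => by rw [hx' i (hsub j (hL j) i hi)]

lemma length_termwiseTested_cons (j : Fin m) (L : List (Fin m)) (x : Fin n → Bool) :
    (termwiseTested T (j :: L) x).length = (T j).card +
      if ∀ i ∈ T j, x i = true then 0 else (termwiseTested T L x).length := by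
  rw [termwiseTested, List.length_append, Finset.length_toList, apply_ite List.length,
    List.length_nil]

lemma sum_cube_length_termwiseTested (hdisj : ∀ j k, j ≠ k → Disjoint (T j) (T k)) :
    ∀ L : List (Fin m), L.Nodup → ∀ (E : Finset (Fin n)) (y : Fin n → Bool),
      (∀ j ∈ L, Disjoint (T j) E) →
        (∑ x ∈ cube E y, ((termwiseTested T L x).length : ℝ)) * 2 ^ E.card =
          2 ^ n * termwiseCost (L.map fun j => (T j).card)
  | [], _, E, y, _ => by simp [termwiseTested, termwiseCost]
  | j :: L, hnd, E, y, hE => by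
    obtain ⟨hjL, hnd⟩ := List.nodup_cons.1 hnd
    have hjE := hE j List.mem_cons_self
    set y' : Fin n → Bool := fun i => if i ∈ T j then true else y i
    have htrue : (cube E y).filter (fun x => ∀ i ∈ T j, x i = true) = cube (E ∪ T j) y' := by
      rw [cube_union, cube_congr (y' := y') fun i hi => by
        simp [y', Finset.disjoint_right.1 hjE hi]]
      exact Finset.filter_congr fun x _ => forall₂_congr fun i hi => by simp [y', hi]
    have ih₁ := sum_cube_length_termwiseTested hdisj L hnd E y
      fun k hk => hE k (List.mem_cons_of_mem j hk)
    have ih₂ := sum_cube_length_termwiseTested hdisj L hnd (E ∪ T j) y' fun k hk =>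
      Finset.disjoint_union_right.2 ⟨hE k (List.mem_cons_of_mem j hk),
        hdisj k j fun h => hjL (h ▸ hk)⟩
    rw [Finset.card_union_of_disjoint hjE.symm, pow_add] at ih₂
    have hpt : ∀ x, ((termwiseTested T (j :: L) x).length : ℝ) = (T j).card +
        (termwiseTested T L x).length -
          if ∀ i ∈ T j, x i = true then ((termwiseTested T L x).length : ℝ) else 0 := fun x => by
      rw [length_termwiseTested_cons]; split_ifs <;> push_cast <;> ring
    have hpow : (2 : ℝ) ^ (T j).card * (1 / 2) ^ (T j).card = 1 := by
      rw [← mul_pow]; norm_num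
    rw [Finset.sum_congr rfl fun x _ => hpt x, Finset.sum_sub_distrib, Finset.sum_add_distrib,
      ← Finset.sum_filter, htrue, Finset.sum_const, nsmul_eq_mul]
    simp only [List.map_cons, termwiseCost, termFalseProb]
    linear_combination ((T j).card : ℝ) * card_cube_mul_two_pow E y + ih₁ -
      (1 / 2 : ℝ) ^ (T j).card * ih₂ +
      (∑ x ∈ cube (E ∪ T j) y', ((termwiseTested T L x).length : ℝ)) * 2 ^ E.card * hpow

end Termwise


lemma sum_prodWeight_half_mul {n : ℕ} (g : (Fin n → Bool) → ℝ) :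
    ∑ x, prodWeight n (fun _ => 1 / 2) x * g x = (∑ x, g x) / 2 ^ n := by
  have : ∀ x, prodWeight n (fun _ => 1 / 2) x = (1 / 2) ^ n := fun x => by
    rw [prodWeight, Finset.prod_congr rfl fun i _ =>
      (show (if x i then (1 / 2 : ℝ) else 1 - 1 / 2) = 1 / 2 by split_ifs <;> norm_num),
      Finset.prod_const, Finset.card_univ, Fintype.card_fin]
  rw [Finset.sum_congr rfl fun x _ => by rw [this], ← Finset.mul_sum, one_div_pow,
    one_div_mul_eq_div]

lemma exists_nodup_map_eq_sort {m : ℕ} (g : Fin m → ℕ) :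
    ∃ L : List (Fin m), L.Nodup ∧ (∀ j, j ∈ L) ∧ L.map g = (Finset.univ.val.map g).sort := by
  set L := (List.finRange m).mergeSort fun a b => decide (g a ≤ g b)
  have hperm : L.Perm (List.finRange m) := List.mergeSort_perm _ _
  refine ⟨L, hperm.nodup_iff.2 (List.nodup_finRange m),
    fun j => hperm.mem_iff.2 (List.mem_finRange j), ?_⟩
  refine List.Perm.eq_of_pairwise' ?_ (Multiset.pairwise_sort _ _) ?_
  · rw [List.pairwise_map]
    refine (List.pairwise_mergeSort ?_ ?_ _).imp fun h => by simpa using h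
    · intro a b c; simp only [decide_eq_true_eq]; omega
    · intro a b; simp only [Bool.or_eq_true, decide_eq_true_eq]; omega
  · rw [← Multiset.coe_eq_coe, Multiset.sort_eq, Fin.univ_val_map, List.ofFn_eq_map]
    exact Multiset.coe_eq_coe.2 (hperm.map g)


section Uniform

variable {n m : ℕ} {T : Fin m → Finset (Fin n)} {f : (Fin n → Bool) → Bool}

lemma exists_perm_naCost_le_termwiseTested (hdisj : ∀ j k, j ≠ k → Disjoint (T j) (T k))
    (hf : ∀ x, f x = true ↔ ∃ j, ∀ i ∈ T j, x i = true) {L : List (Fin m)} (hnd : L.Nodup)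
    (hL : ∀ j, j ∈ L) :
    ∃ π : Equiv.Perm (Fin n), ∀ x,
      naCost n f (fun _ => 1) π x ≤ (termwiseTested T L x).length := by
  have hblocks : (L.flatMap fun j => (T j).toList).Nodup :=
    List.nodup_flatMap.2 ⟨fun j _ => Finset.nodup_toList _, hnd.imp fun hjk i hij hik =>
      Finset.disjoint_left.1 (hdisj _ _ hjk) (Finset.mem_toList.1 hij) (Finset.mem_toList.1 hik)⟩
  obtain ⟨π, hπ⟩ := exists_perm_prefix_ofFn hblocks
  refine ⟨π, fun x => naCost_le_of_determines ?_⟩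
  rw [prefixSet_eq_toFinset_take,
    ← List.prefix_iff_eq_take.1 ((termwiseTested_prefix x L).trans hπ)]
  exact determines_termwiseTested hf hL x

lemma exists_perm_naExpCost_le (hdisj : ∀ j k, j ≠ k → Disjoint (T j) (T k))
    (hf : ∀ x, f x = true ↔ ∃ j, ∀ i ∈ T j, x i = true) :
    ∃ π : Equiv.Perm (Fin n), naExpCost n f (fun _ => 1) (fun _ => 1 / 2) π ≤
      sortedTermwiseCost (Finset.univ.val.map fun j => (T j).card) := by
  obtain ⟨L, hnd, hL, hsort⟩ := exists_nodup_map_eq_sort fun j => (T j).card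
  obtain ⟨π, hπ⟩ := exists_perm_naCost_le_termwiseTested hdisj hf hnd hL
  refine ⟨π, ?_⟩
  have := sum_cube_length_termwiseTested hdisj L hnd ∅ (fun _ => false) (by simp)
  rw [naExpCost, sum_prodWeight_half_mul, div_le_iff₀ (by positivity), sortedTermwiseCost,
    ← hsort]
  refine (Finset.sum_le_sum fun x _ => hπ x).trans_eq ?_
  simpa [mul_comm] using this

lemma sortedTermwiseCost_le_mul_adExpCost {w : ℕ} (hdisj : ∀ j k, j ≠ k → Disjoint (T j) (T k))
    (hwidth : ∀ j, (T j).card ≤ w) (hf : ∀ x, f x = true ↔ ∃ j, ∀ i ∈ T j, x i = true)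
    {t : DecTree n} (ht : t.Computes f) :
    sortedTermwiseCost (Finset.univ.val.map fun j => (T j).card) ≤
      w * adExpCost n (fun _ => 1) (fun _ => 1 / 2) t := by
  have := sortedTermwiseCost_residualSizes_mul_le hdisj hwidth hf t ∅ (fun _ => false)
    fun x _ => ht x
  rw [residualSizes_empty] at this
  rw [adExpCost, sum_prodWeight_half_mul, mul_div_assoc', le_div_iff₀ (by positivity)]
  simpa using this

end Uniform

lemma le_mul_OPTA {n : ℕ} {f : (Fin n → Bool) → Bool} {c p : Fin n → ℝ} {a r : ℝ} (hr : 0 ≤ r)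
    (h : ∀ t : DecTree n, t.Computes f → a ≤ r * adExpCost n c p t) :
    a ≤ r * OPTA n f c p := by
  obtain ⟨t₀, ht₀⟩ := DecTree.exists_computes f
  rw [OPTA, ← smul_eq_mul, ← Real.sInf_smul_of_nonneg hr]
  refine le_csInf ⟨_, Set.smul_mem_smul_set ⟨t₀, ht₀, rfl⟩⟩ ?_
  rintro _ ⟨_, ⟨t, ht, rfl⟩, rfl⟩
  exact h t ht

lemma OPTN_le_naExpCost {n : ℕ} {f : (Fin n → Bool) → Bool} {c p : Fin n → ℝ}
    (hc : ∀ i, 0 ≤ c i) (hp₀ : ∀ i, 0 ≤ p i) (hp₁ : ∀ i, p i ≤ 1) (π : Equiv.Perm (Fin n)) :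
    OPTN n f c p ≤ naExpCost n f c p π := by
  refine csInf_le ⟨0, ?_⟩ ⟨π, rfl⟩
  rintro _ ⟨π, rfl⟩
  refine Finset.sum_nonneg fun x _ => mul_nonneg ?_ (Finset.sum_nonneg fun i _ => hc i)
  exact Finset.prod_nonneg fun i _ => by split_ifs <;> linarith [hp₀ i, hp₁ i]

theorem stmt18_general (n : ℕ) (w : ℕ) (m : ℕ)
    (T : Fin m → Finset (Fin n)) (f : (Fin n → Bool) → Bool)
    (hf : IsReadOnceDNF n m T f)
    (hwidth : ∀ j, (T j).card ≤ w) :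
    (∃ π : Equiv.Perm (Fin n),
        naExpCost n f (fun _ => 1) (fun _ => 1/2) π ≤
          (w : ℝ) * OPTA n f (fun _ => 1) (fun _ => 1/2)) ∧
    OPTN n f (fun _ => 1) (fun _ => 1/2) ≤
      (w : ℝ) * OPTA n f (fun _ => 1) (fun _ => 1/2) := by
  obtain ⟨-, hdisj, hf⟩ := hf
  obtain ⟨π, hπ⟩ := exists_perm_naExpCost_le hdisj hf
  have hopt := le_mul_OPTA w.cast_nonneg fun t ht =>
    sortedTermwiseCost_le_mul_adExpCost hdisj hwidth hf ht
  exact ⟨⟨π, hπ.trans hopt⟩,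
    (OPTN_le_naExpCost (fun _ => zero_le_one) (fun _ => by norm_num) (fun _ => by norm_num) π).trans
      (hπ.trans hopt)⟩

/-- Let `f` be a monotone read-once DNF in which every term contains at most `w`
variables, where `w ≥ 1`. Under unit costs and the uniform distribution there is a
non-adaptive strategy of expected cost at most `w·OPT_A(f)`; in particular
`OPT_N(f) ≤ w·OPT_A(f)`. -/
theorem stmt18 (n : ℕ) (hn : 1 ≤ n) (w : ℕ) (hw : 1 ≤ w) (m : ℕ)
    (T : Fin m → Finset (Fin n)) (f : (Fin n → Bool) → Bool)
    (hf : IsReadOnceDNF n m T f)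
    (hwidth : ∀ j, (T j).card ≤ w) :
    (∃ π : Equiv.Perm (Fin n),
        naExpCost n f (fun _ => 1) (fun _ => 1/2) π ≤
          (w : ℝ) * OPTA n f (fun _ => 1) (fun _ => 1/2)) ∧
    OPTN n f (fun _ => 1) (fun _ => 1/2) ≤
      (w : ℝ) * OPTA n f (fun _ => 1) (fun _ => 1/2) :=
  stmt18_general n w m T f hf hwidth
end
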